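/- arXiv:2409.18056 — 2 statements merged into one kernel-verified Lean document; each statement's English description precedes it below -/
import Mathlib

section
/- Let A be a skew brace and I an ideal of A. Then [I,A]_Ab, the additive subgroup generated by { i+b-i-b, i*b, i∘b∘i'∘b' : i ∈ I, b ∈ A }, is an ideal of A. -/
/-- A skew brace: a type with an additive group structure and a second group
operation `circ` (with inverse `cinv` and the same identity `0`) satisfying the
skew brace compatibility law `a ∘ (b + c) = a ∘ b - a + a ∘ c`. -/
class SkewBrace (A : Type*) extends AddGroup A where
  circ : A → A → A
  cinv : A → A
  circ_assoc : ∀ a b c : A, circ (circ a b) c = circ a (circ b c)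
  zero_circ : ∀ a : A, circ 0 a = a
  circ_zero : ∀ a : A, circ a 0 = a
  cinv_circ : ∀ a : A, circ (cinv a) a = 0
  circ_cinv : ∀ a : A, circ a (cinv a) = 0
  compat : ∀ a b c : A, circ a (b + c) = circ a b - a + circ a c

namespace SkewBrace

variable {A : Type*} [SkewBrace A]

/-- The star operation `a * b = -a + a ∘ b - b`. -/
def star (a b : A) : A := -a + circ a b - b

/-- The right distributor `[a,b,c] = (a+b)∘c - b∘c + c - a∘c`. -/
def rd (a b c : A) : A := circ (a + b) c - circ b c + c - circ a c

/-- An ideal of a skew brace: a normal additive subgroup closed under the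
star operation on both sides. -/
def IsIdeal (I : AddSubgroup A) : Prop :=
  (∀ a : A, ∀ x ∈ I, a + x - a ∈ I) ∧
  (∀ a : A, ∀ x ∈ I, star a x ∈ I) ∧
  (∀ a : A, ∀ x ∈ I, star x a ∈ I)

/-- `Z_R(A)`: additively central elements annihilating all right distributors. -/
def ZR (A : Type*) [SkewBrace A] : Set A :=
  {z | (∀ a : A, z + a = a + z) ∧ ∀ b c : A, rd z b c = 0 ∧ rd b z c = 0 ∧ rd b c z = 0}

end SkewBrace

/-!
Every generator lies in `I`: the additive commutator because `I` is normal in `(A,+)`, `i * b`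
because `I` is an ideal, and `i ∘ b ∘ i' ∘ b'` because `I` is a normal subgroup of `(A,∘)`.
Hence `J = [I,A]_Ab ≤ I`, so `J` is normal in `(A,+)` (it contains `[x,a]` for `x ∈ J`) and
closed under `x * a`. For `b * i`, put `c = i ∘ b ∘ i' ∘ b' ∈ I`; then `c ∘ (b ∘ i) = i ∘ b`, and
expanding both sides with `x ∘ y = x + x * y + y` writes `b * i` as the conjugate by `-b` of a
sum of generators.
-/

lemma AddSubgroup.normal_of_addCommutator_mem {G : Type*} [AddGroup G]
    (H : AddSubgroup G) (h : ∀ x ∈ H, ∀ a : G, x + a - x - a ∈ H) : H.Normal where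
  conj_mem x hx a := by
    have e : a + x + -a = -(x + a - x - a) + x := by simp [sub_eq_add_neg, add_assoc]
    rw [e]
    exact H.add_mem (H.neg_mem (h x hx a)) hx

namespace SkewBrace

variable {A : Type*} [SkewBrace A]

def addCommutator (i b : A) : A := i + b - i - b

def circCommutator (i b : A) : A := circ (circ (circ i b) (cinv i)) (cinv b)

/-- The generators of `[I,A]_Ab`. -/
def commGenerators (I : AddSubgroup A) : Set A :=
  {x | ∃ i ∈ I, ∃ b : A, x = addCommutator i b ∨ x = star i b ∨ x = circCommutator i b}

lemma circ_eq_add_star_add (x y : A) : circ x y = x + star x y + y := by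
  simp [star, sub_eq_add_neg, add_assoc]

lemma cinv_circ_circ (a x : A) : circ (cinv a) (circ a x) = x := by
  rw [← circ_assoc, cinv_circ, zero_circ]

lemma circCommutator_circ (i b : A) : circ (circCommutator i b) (circ b i) = circ i b := by
  rw [circCommutator, circ_assoc, cinv_circ_circ, circ_assoc, cinv_circ, circ_zero]

lemma star_eq_neg_add_add (i b : A) :
    star b i = -b + (-star (circCommutator i b) (circ b i) + -circCommutator i b +
      (i + star i b + -i) + addCommutator i b) + b := by
  have h : circCommutator i b + star (circCommutator i b) (circ b i) + (b + star b i + i) =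
      i + star i b + b := by
    rw [← circ_eq_add_star_add b i, ← circ_eq_add_star_add, ← circ_eq_add_star_add,
      circCommutator_circ]
  have hsolve : star b i = -b + (-star (circCommutator i b) (circ b i) + -circCommutator i b +
      (i + star i b + b)) + -i := by
    rw [← h]
    simp [add_assoc]
  rw [hsolve]
  simp [addCommutator, sub_eq_add_neg, add_assoc]

namespace IsIdeal

variable {I : AddSubgroup A} (hI : IsIdeal I)
include hI

lemma cinv_mem {i : A} (hi : i ∈ I) : cinv i ∈ I := by
  have h : cinv i = -(i + star i (cinv i)) :=
    eq_neg_of_add_eq_zero_right (by rw [← circ_eq_add_star_add, circ_cinv])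
  rw [h]
  exact I.neg_mem (I.add_mem hi (hI.2.2 _ _ hi))

lemma circ_mem {i j : A} (hi : i ∈ I) (hj : j ∈ I) : circ i j ∈ I := by
  rw [circ_eq_add_star_add]
  exact I.add_mem (I.add_mem hi (hI.2.2 _ _ hi)) hj

lemma circ_circ_cinv_mem {i : A} (hi : i ∈ I) (b : A) : circ b (circ i (cinv b)) ∈ I := by
  have hk : i + star i (cinv b) ∈ I := I.add_mem hi (hI.2.2 _ _ hi)
  have e : circ b (circ i (cinv b)) =
      b + (star b (i + star i (cinv b)) + (i + star i (cinv b))) - b := by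
    rw [circ_eq_add_star_add i (cinv b), compat, circ_cinv, circ_eq_add_star_add]
    simp [sub_eq_add_neg, add_assoc]
  rw [e]
  exact hI.1 b _ (I.add_mem (hI.2.1 _ _ hk) hk)

lemma addCommutator_mem {i : A} (hi : i ∈ I) (b : A) : addCommutator i b ∈ I := by
  have e : addCommutator i b = i + (b + -i - b) := by
    simp [addCommutator, sub_eq_add_neg, add_assoc]
  rw [e]
  exact I.add_mem hi (hI.1 b _ (I.neg_mem hi))

lemma circCommutator_mem {i : A} (hi : i ∈ I) (b : A) : circCommutator i b ∈ I := by
  rw [circCommutator, circ_assoc, circ_assoc]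
  exact hI.circ_mem hi (hI.circ_circ_cinv_mem (hI.cinv_mem hi) b)

lemma commGenerators_subset : commGenerators I ⊆ I := by
  rintro x ⟨i, hi, b, rfl | rfl | rfl⟩
  · exact hI.addCommutator_mem hi b
  · exact hI.2.2 b i hi
  · exact hI.circCommutator_mem hi b

lemma star_mem_of_commGenerators_subset {J : AddSubgroup A} (hJ : J.Normal)
    (hsub : commGenerators I ⊆ J) (b : A) {i : A} (hi : i ∈ I) : star b i ∈ J := by
  have h₁ : star (circCommutator i b) (circ b i) ∈ J :=
    hsub ⟨_, hI.circCommutator_mem hi b, _, .inr (.inl rfl)⟩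
  have h₂ : circCommutator i b ∈ J := hsub ⟨i, hi, b, .inr (.inr rfl)⟩
  have h₃ : star i b ∈ J := hsub ⟨i, hi, b, .inr (.inl rfl)⟩
  have h₄ : addCommutator i b ∈ J := hsub ⟨i, hi, b, .inl rfl⟩
  have hsum := J.add_mem (J.add_mem (J.add_mem (J.neg_mem h₁) (J.neg_mem h₂))
    (hJ.conj_mem _ h₃ i)) h₄
  rw [star_eq_neg_add_add]
  simpa using hJ.conj_mem _ hsum (-b)

end IsIdeal

end SkewBrace

open SkewBrace

theorem stmt11 {A : Type*} [SkewBrace A] (I : AddSubgroup A) (hI : IsIdeal I) :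
    IsIdeal (AddSubgroup.closure
      {x : A | ∃ i ∈ I, ∃ b : A,
        x = i + b - i - b ∨ x = star i b ∨
        x = SkewBrace.circ (SkewBrace.circ (SkewBrace.circ i b) (SkewBrace.cinv i))
              (SkewBrace.cinv b)}) := by
  change IsIdeal (AddSubgroup.closure (commGenerators I))
  set J := AddSubgroup.closure (commGenerators I)
  have hJI : J ≤ I := (AddSubgroup.closure_le I).2 hI.commGenerators_subset
  have hgen : commGenerators I ⊆ J := AddSubgroup.subset_closure
  have hJ : J.Normal := J.normal_of_addCommutator_mem fun x hx a =>
    hgen ⟨x, hJI hx, a, .inl rfl⟩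
  refine ⟨fun a x hx => ?_, fun b i hi => hI.star_mem_of_commGenerators_subset hJ hgen b (hJI hi),
    fun a x hx => hgen ⟨x, hJI hx, a, .inr (.inl rfl)⟩⟩
  simpa [sub_eq_add_neg] using hJ.conj_mem x hx a
end

section
/- Let A be a skew brace. The additive subgroup A*A generated by { a*b : a,b ∈ A }, where a*b = -a + a∘b - b, is an ideal of A, and the quotient skew brace A/(A*A) satisfies x + y = x ∘ y for all x,y (i.e., is a group). Moreover, if I is any ideal of A such that A/I satisfies x + y = x ∘ y, then A*A ⊆ I. -/
open SkewBrace

/-!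
`A * A` contains every star element, so it is an ideal as soon as it is a normal subgroup; this
holds because the conjugate `b + a * c - b` equals `-(a * b) + a * (b + c)`, a consequence of the
compatibility law. Modulo any normal subgroup `N`, the element `a * b = -a + (a ∘ b - b)` is
conjugate to `-(a + b - a ∘ b)`, so `a * b ∈ N ↔ a + b - a ∘ b ∈ N`. Hence `A / N` is trivial as a
skew brace (`x + y = x ∘ y`) exactly when `N` contains all star elements, i.e. when `A * A ≤ N`.
-/

namespace SkewBrace

variable {A : Type*} [SkewBrace A]

variable (A) in
/-- `A * A` in the paper's notation. -/
def starSubgroup : AddSubgroup A :=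
  AddSubgroup.closure {x : A | ∃ a b : A, x = star a b}

theorem star_mem_starSubgroup (a b : A) : star a b ∈ starSubgroup A :=
  AddSubgroup.subset_closure ⟨a, b, rfl⟩

theorem add_star_sub (a b c : A) : b + star a c - b = -star a b + star a (b + c) := by
  simp only [star, compat, sub_eq_add_neg, neg_add_rev, neg_neg, add_assoc, neg_add_cancel_left,
    add_neg_cancel_left]

theorem starSubgroup_normal : (starSubgroup A).Normal := by
  rw [← AddSubgroup.normalizer_eq_top_iff, eq_top_iff, starSubgroup,
    AddSubgroup.le_normalizer_closure_iff]
  rintro b - _ ⟨a, c, rfl⟩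
  rw [← sub_eq_add_neg, add_star_sub]
  exact add_mem (neg_mem (star_mem_starSubgroup a b)) (star_mem_starSubgroup a (b + c))

theorem IsIdeal.normal {I : AddSubgroup A} (hI : IsIdeal I) : I.Normal :=
  ⟨fun x hx a => sub_eq_add_neg (a + x) a ▸ hI.1 a x hx⟩

theorem star_mem_iff {N : AddSubgroup A} [N.Normal] (a b : A) :
    star a b ∈ N ↔ a + b - circ a b ∈ N := by
  have hstar : star a b = -a + (circ a b - b) := by rw [star, add_sub_assoc]
  have hdiff : a + b - circ a b = -(circ a b - b + -a) := by
    simp only [sub_eq_add_neg, neg_add_rev, neg_neg, add_assoc]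
  rw [hstar, hdiff, neg_mem_iff, AddSubgroup.Normal.mem_comm_iff ‹_›]

end SkewBrace

theorem stmt15 {A : Type*} [SkewBrace A]
    (J : AddSubgroup A)
    (hJ : J = AddSubgroup.closure {x : A | ∃ a b : A, x = star a b}) :
    IsIdeal J ∧
    (∀ x y : A, x + y - SkewBrace.circ x y ∈ J) ∧
    (∀ I : AddSubgroup A, IsIdeal I →
      (∀ x y : A, x + y - SkewBrace.circ x y ∈ I) → J ≤ I) := by
  change J = starSubgroup A at hJ
  subst hJ
  have hnormal := starSubgroup_normal (A := A)
  refine ⟨⟨fun a x hx => ?_, fun a x _ => star_mem_starSubgroup a x,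
    fun a x _ => star_mem_starSubgroup x a⟩,
    fun x y => (star_mem_iff x y).1 (star_mem_starSubgroup x y), fun I hI hIcirc => ?_⟩
  · rw [sub_eq_add_neg]
    exact hnormal.conj_mem x hx a
  · have := hI.normal
    refine (AddSubgroup.closure_le I).2 ?_
    rintro _ ⟨a, b, rfl⟩
    exact (star_mem_iff a b).2 (hIcirc a b)
end
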